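/- Let X¹, X², Y be random variables on a common probability space taking values in finite sets such that X¹ and X² are conditionally independent given Y (Markov chain X² ↔ Y ↔ X¹), and let Z = f(X¹) for a function f with I(Z;X²) = I(X¹;X²). Then I(Z;Y) = I(X¹;Y) − I(X¹;Y | X²) + I(Z;Y | X²). -/

import Mathlib

/-!
Expanding the entropies, `I(X;Y) + I(X;X²|Y) = I(X;X²) + I(X;Y|X²)` for every `X`. The Markov
chain makes `I(X;X²|Y)` vanish for `X = X¹`, and also for `X = f(X¹)` since conditional
independence passes to functions. Subtracting the two instances of the identity and using
`I(f(X¹);X²) = I(X¹;X²)` gives the claim.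
-/

open MeasureTheory Real

/-- Shannon entropy `H(X)` of a random variable `X` taking values in a finite set,
under the measure `μ`. -/
noncomputable def Hent {Ω α : Type*} [MeasurableSpace Ω] [Fintype α]
    (μ : Measure Ω) (X : Ω → α) : ℝ :=
  -∑ x : α, (μ (X ⁻¹' {x})).toReal * Real.log (μ (X ⁻¹' {x})).toReal

/-- Conditional entropy `H(X | Y)`. -/
noncomputable def condEnt {Ω α β : Type*} [MeasurableSpace Ω] [Fintype α] [Fintype β]
    (μ : Measure Ω) (X : Ω → α) (Y : Ω → β) : ℝ :=
  Hent μ (fun ω => (X ω, Y ω)) - Hent μ Y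

/-- Mutual information `I(X;Y)`. -/
noncomputable def mutInfo {Ω α β : Type*} [MeasurableSpace Ω] [Fintype α] [Fintype β]
    (μ : Measure Ω) (X : Ω → α) (Y : Ω → β) : ℝ :=
  Hent μ X + Hent μ Y - Hent μ (fun ω => (X ω, Y ω))

/-- Conditional mutual information `I(X;Y | Z)`. -/
noncomputable def condMutInfo {Ω α β γ : Type*} [MeasurableSpace Ω]
    [Fintype α] [Fintype β] [Fintype γ]
    (μ : Measure Ω) (X : Ω → α) (Y : Ω → β) (Z : Ω → γ) : ℝ :=
  Hent μ (fun ω => (X ω, Z ω)) + Hent μ (fun ω => (Y ω, Z ω))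
    - Hent μ (fun ω => ((X ω, Y ω), Z ω)) - Hent μ Z

/-- Random variables `X` and `Y` (with values in finite/discrete sets) are conditionally
independent given `Z`: for all outcomes, `P(X = x, Y = y, Z = z) · P(Z = z)
= P(X = x, Z = z) · P(Y = y, Z = z)`.  For finitely-valued random variables this is
equivalent to the usual almost-sure factorization of conditional probabilities. -/
def CondIndepFin {Ω α β γ : Type*} [MeasurableSpace Ω]
    (μ : Measure Ω) (X : Ω → α) (Y : Ω → β) (Z : Ω → γ) : Prop :=
  ∀ (x : α) (y : β) (z : γ),
    μ (X ⁻¹' {x} ∩ Y ⁻¹' {y} ∩ Z ⁻¹' {z}) * μ (Z ⁻¹' {z})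
      = μ (X ⁻¹' {x} ∩ Z ⁻¹' {z}) * μ (Y ⁻¹' {y} ∩ Z ⁻¹' {z})

section Entropy

open Finset

variable {Ω : Type*} [MeasurableSpace Ω]

lemma Hent_comp_equiv {α β : Type*} [Fintype α] [Fintype β]
    (μ : Measure Ω) (X : Ω → α) (e : α ≃ β) :
    Hent μ (fun ω => e (X ω)) = Hent μ X := by
  have hpre (a : α) : (fun ω => e (X ω)) ⁻¹' {e a} = X ⁻¹' {a} := by
    ext
    simp
  unfold Hent
  rw [← Equiv.sum_comp e]
  simp only [hpre]

lemma measure_preimage_inter_eq_sum {α : Type*} [MeasurableSpace α]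
    [MeasurableSingletonClass α] (μ : Measure Ω) {X : Ω → α} (hX : Measurable X)
    (s : Finset α) (S : Set Ω) :
    μ (X ⁻¹' s ∩ S) = ∑ a ∈ s, μ (X ⁻¹' {a} ∩ S) := by
  have hfib : ∀ a ∈ s, MeasurableSet (X ⁻¹' {a}) := fun a _ => hX (measurableSet_singleton a)
  rw [← Measure.restrict_apply (hX s.measurableSet), ← sum_measure_preimage_singleton s hfib]
  exact sum_congr rfl fun a ha => Measure.restrict_apply (hfib a ha)

lemma Hent_comp_eq_sum {α β : Type*} [MeasurableSpace α] [MeasurableSingletonClass α]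
    [Fintype α] [Fintype β] (μ : Measure Ω) [IsFiniteMeasure μ]
    {W : Ω → α} (hW : Measurable W) (g : α → β) :
    Hent μ (fun ω => g (W ω)) =
      -∑ a, μ.real (W ⁻¹' {a}) * log (μ.real ((fun ω => g (W ω)) ⁻¹' {g a})) := by
  classical
  have hfiber (b : β) :
      μ.real ((fun ω => g (W ω)) ⁻¹' {b}) = ∑ a with g a = b, μ.real (W ⁻¹' {a}) := by
    have hpre : (fun ω => g (W ω)) ⁻¹' {b} = W ⁻¹' ↑(univ.filter fun a => g a = b) := by
      ext; simp
    rw [hpre, measureReal_def,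
      ← sum_measure_preimage_singleton _ fun a _ => hW (measurableSet_singleton a),
      ENNReal.toReal_sum fun a _ => measure_ne_top μ _]
    rfl
  unfold Hent
  congr 1
  rw [← sum_fiberwise univ g]
  refine sum_congr rfl fun b _ => ?_
  calc _ = (∑ a with g a = b, μ.real (W ⁻¹' {a}))
          * log (μ.real ((fun ω => g (W ω)) ⁻¹' {b})) := by
        rw [← hfiber]
        rfl
    _ = _ := by
        rw [sum_mul]
        exact sum_congr rfl fun a ha => by rw [(mem_filter.1 ha).2]

lemma mutInfo_add_condMutInfo_comm {α β γ : Type*} [Fintype α] [Fintype β] [Fintype γ]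
    (μ : Measure Ω) (X : Ω → α) (Y : Ω → β) (Z : Ω → γ) :
    mutInfo μ X Y + condMutInfo μ X Z Y = mutInfo μ X Z + condMutInfo μ X Y Z := by
  have hYZ : Hent μ (fun ω => (Z ω, Y ω)) = Hent μ (fun ω => (Y ω, Z ω)) :=
    Hent_comp_equiv μ (fun ω => (Y ω, Z ω)) (Equiv.prodComm β γ)
  have hXYZ : Hent μ (fun ω => ((X ω, Z ω), Y ω)) = Hent μ (fun ω => ((X ω, Y ω), Z ω)) :=
    Hent_comp_equiv μ (fun ω => ((X ω, Y ω), Z ω))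
      ⟨fun p => ((p.1.1, p.2), p.1.2), fun p => ((p.1.1, p.2), p.1.2), fun _ => rfl, fun _ => rfl⟩
  unfold mutInfo condMutInfo
  rw [hYZ, hXYZ]
  ring

lemma mul_log_add_mul_log_eq_of_mul_eq {p a b c : ℝ} (hc : p ≠ 0 → c ≠ 0)
    (h : p * c = a * b) : p * log p + p * log c = p * log a + p * log b := by
  rcases eq_or_ne p 0 with rfl | hp
  · simp
  have hab : a * b ≠ 0 := h ▸ mul_ne_zero hp (hc hp)
  rw [← mul_add, ← mul_add, ← log_mul hp (hc hp), h,
    log_mul (left_ne_zero_of_mul hab) (right_ne_zero_of_mul hab)]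

lemma CondIndepFin.comp_left {α β γ δ : Type*} [MeasurableSpace α]
    [MeasurableSingletonClass α] [Fintype α] {μ : Measure Ω} {X : Ω → α} {Y : Ω → β}
    {Z : Ω → γ} (h : CondIndepFin μ X Y Z) (hX : Measurable X) (f : α → δ) :
    CondIndepFin μ (fun ω => f (X ω)) Y Z := by
  classical
  intro d y z
  have hpre : (fun ω => f (X ω)) ⁻¹' {d} = X ⁻¹' ↑(univ.filter fun a => f a = d) := by
    ext; simp
  rw [Set.inter_assoc, hpre, measure_preimage_inter_eq_sum μ hX,
    measure_preimage_inter_eq_sum μ hX, sum_mul, sum_mul]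
  exact sum_congr rfl fun a _ => by rw [← Set.inter_assoc]; exact h a y z

lemma condMutInfo_eq_zero_of_condIndepFin {α β γ : Type*}
    [MeasurableSpace α] [MeasurableSingletonClass α] [Fintype α]
    [MeasurableSpace β] [MeasurableSingletonClass β] [Fintype β]
    [MeasurableSpace γ] [MeasurableSingletonClass γ] [Fintype γ]
    (μ : Measure Ω) [IsFiniteMeasure μ] {X : Ω → α} {Y : Ω → β} {Z : Ω → γ}
    (hX : Measurable X) (hY : Measurable Y) (hZ : Measurable Z)
    (h : CondIndepFin μ X Y Z) : condMutInfo μ X Y Z = 0 := by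
  unfold condMutInfo
  set W : Ω → (α × β) × γ := fun ω => ((X ω, Y ω), Z ω)
  have hW : Measurable W := (hX.prodMk hY).prodMk hZ
  have hfiber (x : α) (y : β) (z : γ) :
      W ⁻¹' {((x, y), z)} = X ⁻¹' {x} ∩ Y ⁻¹' {y} ∩ Z ⁻¹' {z} := by
    simp only [W, ← Set.singleton_prod_singleton, Set.mk_preimage_prod]
  -- Written as a sum over the law of `W`, the term of `condMutInfo` at `(x,y,z)` is
  -- `p(x,y,z) log (p(x,y,z) p(z) / (p(x,z) p(y,z)))`, zero by the factorization.
  have hterm (w : (α × β) × γ) :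
      μ.real (W ⁻¹' {w}) * log (μ.real (W ⁻¹' {w}))
        + μ.real (W ⁻¹' {w}) * log (μ.real (Z ⁻¹' {w.2}))
        = μ.real (W ⁻¹' {w}) * log (μ.real ((fun ω => (X ω, Z ω)) ⁻¹' {(w.1.1, w.2)}))
          + μ.real (W ⁻¹' {w}) * log (μ.real ((fun ω => (Y ω, Z ω)) ⁻¹' {(w.1.2, w.2)})) := by
    obtain ⟨⟨x, y⟩, z⟩ := w
    refine mul_log_add_mul_log_eq_of_mul_eq (fun hp hz => hp ?_) ?_
    · exact le_antisymm (hz ▸ measureReal_mono fun ω hω => by simp_all [W]) measureReal_nonneg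
    · rw [hfiber]
      simpa only [measureReal_def, ← Set.singleton_prod_singleton, Set.mk_preimage_prod,
        ENNReal.toReal_mul] using congrArg ENNReal.toReal (h x y z)
  have hsum := sum_congr rfl fun w (_ : w ∈ univ) => hterm w
  simp only [sum_add_distrib] at hsum
  have hentXZ : Hent μ (fun ω => (X ω, Z ω)) = -∑ w, μ.real (W ⁻¹' {w})
      * log (μ.real ((fun ω => (X ω, Z ω)) ⁻¹' {(w.1.1, w.2)})) :=
    Hent_comp_eq_sum μ hW fun w => (w.1.1, w.2)
  have hentYZ : Hent μ (fun ω => (Y ω, Z ω)) = -∑ w, μ.real (W ⁻¹' {w})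
      * log (μ.real ((fun ω => (Y ω, Z ω)) ⁻¹' {(w.1.2, w.2)})) :=
    Hent_comp_eq_sum μ hW fun w => (w.1.2, w.2)
  have hentZ : Hent μ Z = -∑ w, μ.real (W ⁻¹' {w}) * log (μ.real (Z ⁻¹' {w.2})) :=
    Hent_comp_eq_sum μ hW Prod.snd
  have hentW : Hent μ W = -∑ w, μ.real (W ⁻¹' {w}) * log (μ.real (W ⁻¹' {w})) := rfl
  linarith

end Entropy

/-- If `X¹ ⫫ X² | Y`, `Z = f ∘ X¹`, and `I(Z;X²) = I(X¹;X²)`, then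
`I(Z;Y) = I(X¹;Y) − I(X¹;Y | X²) + I(Z;Y | X²)`. -/
theorem markov_sufficient_label_identity
    {Ω A B C D : Type*} [MeasurableSpace Ω]
    [MeasurableSpace A] [MeasurableSingletonClass A] [Fintype A]
    [MeasurableSpace B] [MeasurableSingletonClass B] [Fintype B]
    [MeasurableSpace C] [MeasurableSingletonClass C] [Fintype C]
    [MeasurableSpace D] [MeasurableSingletonClass D] [Fintype D]
    (μ : Measure Ω) [IsProbabilityMeasure μ]
    (X1 : Ω → A) (X2 : Ω → B) (Y : Ω → C) (f : A → D)
    (hX1 : Measurable X1) (hX2 : Measurable X2) (hY : Measurable Y)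
    (hMarkov : CondIndepFin μ X1 X2 Y)
    (hsuff : mutInfo μ (fun ω => f (X1 ω)) X2 = mutInfo μ X1 X2) :
    mutInfo μ (fun ω => f (X1 ω)) Y
      = mutInfo μ X1 Y - condMutInfo μ X1 Y X2
        + condMutInfo μ (fun ω => f (X1 ω)) Y X2 := by
  have hZ : Measurable fun ω => f (X1 ω) := (measurable_of_countable f).comp hX1
  have hchain1 := mutInfo_add_condMutInfo_comm μ X1 Y X2
  have hchain2 := mutInfo_add_condMutInfo_comm μ (fun ω => f (X1 ω)) Y X2
  have hvanish1 := condMutInfo_eq_zero_of_condIndepFin μ hX1 hX2 hY hMarkov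
  have hvanish2 :=
    condMutInfo_eq_zero_of_condIndepFin μ hZ hX2 hY (hMarkov.comp_left hX1 f)
  linarith
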